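/- The principal extension Φ(ζ) = F(z) + ζ₁F'(z)ρ + (ζ₂F'(z) + (ζ₁²/2)F''(z))ρ² of a holomorphic function F is Gâteaux differentiable in A₃: for every ζ in its domain there exists Φ'(ζ) ∈ A₃ such that lim_{δ→0⁺}(Φ(ζ + δh) − Φ(ζ))δ⁻¹ = hΦ'(ζ) for all h ∈ A₃; moreover Φ'(ζ) = F'(z) + ζ₁F''(z)ρ + (ζ₂F''(z) + (ζ₁²/2)F'''(z))ρ². -/

import Mathlib

open scoped Topology
open Filter

noncomputable section

/-- The three-dimensional commutative algebra `A₃ = ℂ[ρ]/(ρ³)`,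
represented by coordinates in the Cartan basis `{1, ρ, ρ²}`. -/
@[ext] structure A3 : Type where
  x0 : ℂ
  x1 : ℂ
  x2 : ℂ

namespace A3

instance : Zero A3 := ⟨⟨0,0,0⟩⟩
instance : One A3 := ⟨⟨1,0,0⟩⟩
instance : Add A3 := ⟨fun u v => ⟨u.x0+v.x0, u.x1+v.x1, u.x2+v.x2⟩⟩
instance : Neg A3 := ⟨fun u => ⟨-u.x0, -u.x1, -u.x2⟩⟩
instance : Mul A3 :=
  ⟨fun u v => ⟨u.x0*v.x0, u.x0*v.x1+u.x1*v.x0, u.x0*v.x2+u.x1*v.x1+u.x2*v.x0⟩⟩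
instance : SMul ℂ A3 := ⟨fun a u => ⟨a*u.x0, a*u.x1, a*u.x2⟩⟩

@[simp] lemma zero_x0 : (0:A3).x0 = 0 := rfl
@[simp] lemma zero_x1 : (0:A3).x1 = 0 := rfl
@[simp] lemma zero_x2 : (0:A3).x2 = 0 := rfl
@[simp] lemma one_x0 : (1:A3).x0 = 1 := rfl
@[simp] lemma one_x1 : (1:A3).x1 = 0 := rfl
@[simp] lemma one_x2 : (1:A3).x2 = 0 := rfl
@[simp] lemma add_x0 (u v : A3) : (u+v).x0 = u.x0+v.x0 := rfl
@[simp] lemma add_x1 (u v : A3) : (u+v).x1 = u.x1+v.x1 := rfl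
@[simp] lemma add_x2 (u v : A3) : (u+v).x2 = u.x2+v.x2 := rfl
@[simp] lemma neg_x0 (u : A3) : (-u).x0 = -u.x0 := rfl
@[simp] lemma neg_x1 (u : A3) : (-u).x1 = -u.x1 := rfl
@[simp] lemma neg_x2 (u : A3) : (-u).x2 = -u.x2 := rfl
@[simp] lemma mul_x0 (u v : A3) : (u*v).x0 = u.x0*v.x0 := rfl
@[simp] lemma mul_x1 (u v : A3) : (u*v).x1 = u.x0*v.x1+u.x1*v.x0 := rfl
@[simp] lemma mul_x2 (u v : A3) : (u*v).x2 = u.x0*v.x2+u.x1*v.x1+u.x2*v.x0 := rfl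
@[simp] lemma smul_x0 (a : ℂ) (u : A3) : (a•u).x0 = a*u.x0 := rfl
@[simp] lemma smul_x1 (a : ℂ) (u : A3) : (a•u).x1 = a*u.x1 := rfl
@[simp] lemma smul_x2 (a : ℂ) (u : A3) : (a•u).x2 = a*u.x2 := rfl

instance : AddCommGroup A3 where
  add_assoc u v w := by ext <;> simp <;> ring
  zero_add u := by ext <;> simp
  add_zero u := by ext <;> simp
  add_comm u v := by ext <;> simp <;> ring
  neg_add_cancel u := by ext <;> simp
  nsmul := nsmulRec
  zsmul := zsmulRec

instance : CommRing A3 where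
  __ := (inferInstance : AddCommGroup A3)
  left_distrib u v w := by ext <;> simp <;> ring
  right_distrib u v w := by ext <;> simp <;> ring
  zero_mul u := by ext <;> simp
  mul_zero u := by ext <;> simp
  mul_assoc u v w := by ext <;> simp <;> ring
  one_mul u := by ext <;> simp
  mul_one u := by ext <;> simp
  mul_comm u v := by ext <;> simp <;> ring

instance : Module ℂ A3 where
  one_smul u := by ext <;> simp
  mul_smul a b u := by ext <;> simp <;> ring
  smul_zero a := by ext <;> simp [zero_x0, zero_x1, zero_x2]
  smul_add a u v := by ext <;> simp <;> ring
  add_smul a b u := by ext <;> simp <;> ring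
  zero_smul u := by ext <;> simp [zero_x0, zero_x1, zero_x2]

instance : Algebra ℂ A3 where
  algebraMap :=
    { toFun a := ⟨a, 0, 0⟩
      map_one' := rfl
      map_mul' a b := by ext <;> simp
      map_zero' := rfl
      map_add' a b := by ext <;> simp }
  commutes' a u := by ext <;> simp <;> ring
  smul_def' a u := by ext <;> simp

@[simp] lemma algebraMap_x0 (a : ℂ) : (algebraMap ℂ A3 a).x0 = a := rfl
@[simp] lemma algebraMap_x1 (a : ℂ) : (algebraMap ℂ A3 a).x1 = 0 := rfl
@[simp] lemma algebraMap_x2 (a : ℂ) : (algebraMap ℂ A3 a).x2 = 0 := rfl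

/-- The nilpotent generator `ρ`. -/
def rho : A3 := ⟨0, 1, 0⟩

@[simp] lemma rho_x0 : rho.x0 = 0 := rfl
@[simp] lemma rho_x1 : rho.x1 = 1 := rfl
@[simp] lemma rho_x2 : rho.x2 = 0 := rfl

lemma rho_cube : rho ^ 3 = 0 := by ext <;> simp [pow_succ] <;> ring

/-- The projection `f(a + bρ + cρ²) = a`, as a `ℂ`-algebra homomorphism. -/
def pf : A3 →ₐ[ℂ] ℂ where
  toFun u := u.x0
  map_one' := rfl
  map_mul' u v := rfl
  map_zero' := rfl
  map_add' u v := rfl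
  commutes' a := rfl

@[simp] lemma pf_apply (u : A3) : pf u = u.x0 := rfl

/-- The embedding of `A3` into `EuclideanSpace ℂ (Fin 3)`, used to endow
`A3` with the Euclidean norm on the Cartan coordinates. -/
def toE : A3 →ₗ[ℂ] EuclideanSpace ℂ (Fin 3) where
  toFun u := (WithLp.equiv 2 (Fin 3 → ℂ)).symm ![u.x0, u.x1, u.x2]
  map_add' u v := by
    ext i
    fin_cases i <;> rfl
  map_smul' a u := by
    ext i
    fin_cases i <;> rfl

lemma toE_injective : Function.Injective toE := by
  intro u v h
  have h0 : toE u 0 = toE v 0 := congrArg (fun w => w 0) h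
  have h1 : toE u 1 = toE v 1 := congrArg (fun w => w 1) h
  have h2 : toE u 2 = toE v 2 := congrArg (fun w => w 2) h
  ext
  · exact h0
  · exact h1
  · exact h2

instance : NormedAddCommGroup A3 :=
  NormedAddCommGroup.induced A3 (EuclideanSpace ℂ (Fin 3)) toE.toAddMonoidHom
    toE_injective

instance : NormedSpace ℂ A3 := NormedSpace.induced ℂ A3 (EuclideanSpace ℂ (Fin 3)) toE

lemma norm_def (u : A3) :
    ‖u‖ = Real.sqrt (‖u.x0‖ ^ 2 + ‖u.x1‖ ^ 2 + ‖u.x2‖ ^ 2) := by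
  show ‖toE u‖ = _
  rw [EuclideanSpace.norm_eq]
  simp [toE, Fin.sum_univ_three]

/-- The set `I = {λ₁ρ + λ₂ρ² : λ₁, λ₂ ∈ ℂ}` (the radical of `A₃`). -/
def idealSet : Set A3 := {x | ∃ l1 l2 : ℂ, x = l1 • rho + l2 • rho ^ 2}

/-- The set of directions `{±1, ±i, ±ρ, ±iρ, ±ρ², ±iρ²}`. -/
def dirs : Set A3 :=
  {1, -1, Complex.I • (1:A3), -(Complex.I • (1:A3)),
   rho, -rho, Complex.I • rho, -(Complex.I • rho),
   rho ^ 2, -(rho ^ 2), Complex.I • rho ^ 2, -(Complex.I • rho ^ 2)}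

end A3


open Filter in
lemma slope_tendsto_aux {E : ℂ → ℂ} {L : ℂ} (hE : HasDerivAt E L 0) :
    Tendsto (fun δ : ℝ => ((δ : ℂ))⁻¹ * (E δ - E 0))
      (nhdsWithin 0 (Set.Ioi (0:ℝ))) (nhds L) := by
  have h0 : ((0:ℝ) : ℂ) = 0 := by norm_num
  have h1 : HasDerivAt (fun δ : ℝ => E δ) L 0 :=
    HasDerivAt.comp_ofReal (by rwa [h0])
  have h2 := (hasDerivAt_iff_tendsto_slope.mp h1).mono_left
    (nhdsWithin_mono _ (fun x hx => ne_of_gt hx))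
  refine h2.congr (fun δ => ?_)
  simp [slope, Complex.real_smul, Complex.ofReal_inv, div_eq_inv_mul]

open Filter in
/-- the principal extension of a holomorphic `F` is Gâteaux
differentiable, with derivative
`F'(z) + ζ₁F''(z)ρ + (ζ₂F''(z) + (ζ₁²/2)F'''(z))ρ²`. -/
theorem principal_extension_gateaux_differentiable (D : Set ℂ) (hD : IsOpen D)
    (F : ℂ → ℂ) (hF : DifferentiableOn ℂ F D) (Φ : A3 → A3)
    (hΦ : ∀ ζ : A3, Φ ζ = algebraMap ℂ A3 (F ζ.x0) + (ζ.x1 * deriv F ζ.x0) • A3.rho +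
        (ζ.x2 * deriv F ζ.x0 + ζ.x1 ^ 2 / 2 * deriv (deriv F) ζ.x0) • A3.rho ^ 2) :
    ∀ ζ : A3, ζ.x0 ∈ D → ∀ h : A3,
      Tendsto (fun δ : ℝ => ((δ : ℂ))⁻¹ • (Φ (ζ + (δ : ℂ) • h) - Φ ζ))
        (nhdsWithin 0 (Set.Ioi (0:ℝ)))
        (nhds (h * (algebraMap ℂ A3 (deriv F ζ.x0) +
          (ζ.x1 * deriv (deriv F) ζ.x0) • A3.rho +
          (ζ.x2 * deriv (deriv F) ζ.x0 +
            ζ.x1 ^ 2 / 2 * deriv (deriv (deriv F)) ζ.x0) • A3.rho ^ 2))) := by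
  intro ζ hz h
  set z := ζ.x0 with hzdef
  have hA : AnalyticOnNhd ℂ F D := hF.analyticOnNhd hD
  have hF1 : HasDerivAt F (deriv F z) z := ((hA z hz).differentiableAt).hasDerivAt
  have hF2 : HasDerivAt (deriv F) (deriv (deriv F) z) z :=
    ((hA.deriv z hz).differentiableAt).hasDerivAt
  have hF3 : HasDerivAt (deriv (deriv F)) (deriv (deriv (deriv F)) z) z :=
    ((hA.deriv.deriv z hz).differentiableAt).hasDerivAt
  -- inner function
  have hlin : HasDerivAt (fun w : ℂ => z + w * h.x0) h.x0 0 := by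
    simpa using ((hasDerivAt_id (0:ℂ)).mul_const h.x0).const_add z
  have hz0 : z + (0:ℂ) * h.x0 = z := by ring
  have hG1 : HasDerivAt (fun w : ℂ => F (z + w * h.x0)) (deriv F z * h.x0) 0 := by
    have h1 : HasDerivAt F (deriv F z) (z + (0:ℂ) * h.x0) := by rw [hz0]; exact hF1
    have := h1.comp 0 hlin
    exact this
  have hG2 : HasDerivAt (fun w : ℂ => deriv F (z + w * h.x0)) (deriv (deriv F) z * h.x0) 0 := by
    have h1 : HasDerivAt (deriv F) (deriv (deriv F) z) (z + (0:ℂ) * h.x0) := by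
      rw [hz0]; exact hF2
    have := h1.comp 0 hlin
    exact this
  have hG3 : HasDerivAt (fun w : ℂ => deriv (deriv F) (z + w * h.x0))
      (deriv (deriv (deriv F)) z * h.x0) 0 := by
    have h1 : HasDerivAt (deriv (deriv F)) (deriv (deriv (deriv F)) z) (z + (0:ℂ) * h.x0) := by
      rw [hz0]; exact hF3
    have := h1.comp 0 hlin
    exact this
  -- coordinate functions
  set E0 : ℂ → ℂ := fun w => F (z + w * h.x0) with hE0
  set E1 : ℂ → ℂ := fun w => (ζ.x1 + w * h.x1) * deriv F (z + w * h.x0) with hE1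
  set E2 : ℂ → ℂ := fun w => (ζ.x2 + w * h.x2) * deriv F (z + w * h.x0) +
      (ζ.x1 + w * h.x1) ^ 2 / 2 * deriv (deriv F) (z + w * h.x0) with hE2
  have hlin1 : ∀ c : ℂ, HasDerivAt (fun w : ℂ => c + w * h.x1) h.x1 0 := fun c => by
    simpa using ((hasDerivAt_id (0:ℂ)).mul_const h.x1).const_add c
  have hlin2 : ∀ c : ℂ, HasDerivAt (fun w : ℂ => c + w * h.x2) h.x2 0 := fun c => by
    simpa using ((hasDerivAt_id (0:ℂ)).mul_const h.x2).const_add c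
  set L0 : ℂ := deriv F z * h.x0 with hL0
  set L1 : ℂ := h.x1 * deriv F z + ζ.x1 * (deriv (deriv F) z * h.x0) with hL1
  set L2 : ℂ := h.x2 * deriv F z + ζ.x2 * (deriv (deriv F) z * h.x0) +
      (ζ.x1 * h.x1 * deriv (deriv F) z +
        ζ.x1 ^ 2 / 2 * (deriv (deriv (deriv F)) z * h.x0)) with hL2
  have hD0 : HasDerivAt E0 L0 0 := hG1
  have hD1 : HasDerivAt E1 L1 0 := by
    refine ((hlin1 ζ.x1).mul hG2).congr_deriv ?_
    simp only [hL1, hz0]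
    ring
  have hD2 : HasDerivAt E2 L2 0 := by
    have p1 := (hlin2 ζ.x2).mul hG2
    have sq : HasDerivAt (fun w : ℂ => (ζ.x1 + w * h.x1) ^ 2 / 2)
        (ζ.x1 * h.x1) 0 := by
      refine (((hlin1 ζ.x1).pow 2).div_const 2).congr_deriv ?_
      push_cast
      ring
    have p2 := sq.mul hG3
    have := p1.add p2
    refine this.congr_deriv ?_
    simp only [hL2, hz0]
    ring
  have t0 := slope_tendsto_aux hD0
  have t1 := slope_tendsto_aux hD1
  have t2 := slope_tendsto_aux hD2
  have key : (fun δ : ℝ => ((δ : ℂ))⁻¹ • (Φ (ζ + (δ : ℂ) • h) - Φ ζ)) =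
      fun δ : ℝ => (((δ:ℂ))⁻¹ * (E0 δ - E0 0)) • (1:A3) +
        (((δ:ℂ))⁻¹ * (E1 δ - E1 0)) • A3.rho +
        (((δ:ℂ))⁻¹ * (E2 δ - E2 0)) • A3.rho ^ 2 := by
    funext δ
    ext <;> simp only [hΦ, hzdef, hE0, hE1, hE2, pow_two, sub_eq_add_neg, A3.add_x0, A3.add_x1, A3.add_x2, A3.neg_x0, A3.neg_x1, A3.neg_x2, A3.mul_x0, A3.mul_x1, A3.mul_x2, A3.smul_x0, A3.smul_x1, A3.smul_x2, A3.algebraMap_x0, A3.algebraMap_x1, A3.algebraMap_x2, A3.rho_x0, A3.rho_x1, A3.rho_x2, A3.one_x0, A3.one_x1, A3.one_x2] <;> ring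
  rw [key]
  have tend := ((t0.smul_const (1:A3)).add (t1.smul_const A3.rho)).add
    (t2.smul_const (A3.rho ^ 2))
  convert tend using 2
  ext <;> simp only [hL0, hL1, hL2, hΦ, hzdef, hE0, hE1, hE2, pow_two, sub_eq_add_neg, A3.add_x0, A3.add_x1, A3.add_x2, A3.neg_x0, A3.neg_x1, A3.neg_x2, A3.mul_x0, A3.mul_x1, A3.mul_x2, A3.smul_x0, A3.smul_x1, A3.smul_x2, A3.algebraMap_x0, A3.algebraMap_x1, A3.algebraMap_x2, A3.rho_x0, A3.rho_x1, A3.rho_x2, A3.one_x0, A3.one_x1, A3.one_x2] <;> ring
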